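/- For all binary sequences X and Y: W(X·10·Y) = W(X·01·Y) + W(X)·W(Y). -/

import Mathlib

/-- One move: replace an adjacent pair `10` by `01` (a `1` moves one step right).
`true` encodes the digit 1 and `false` encodes the digit 0. -/
def DomStep (A B : List Bool) : Prop :=
  ∃ X Y : List Bool, A = X ++ true :: false :: Y ∧ B = X ++ false :: true :: Y

/-- `Dom A B` (`A ⪰ B`): `B` is obtained from `A` by finitely many such moves. -/
def Dom : List Bool → List Bool → Prop := Relation.ReflTransGen DomStep

/-- The weight W(A): the number of binary sequences dominated by A. -/
noncomputable def W (A : List Bool) : ℕ := Set.ncard {B | Dom A B}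

namespace WS

/-- number of `true`s among the first `k` entries -/
def cnt (A : List Bool) (k : ℕ) : ℕ := (A.take k).count true

/-- majorization order -/
def Le (A B : List Bool) : Prop :=
  B.length = A.length ∧ B.count true = A.count true ∧ ∀ k, cnt B k ≤ cnt A k

lemma cnt_zero (A : List Bool) : cnt A 0 = 0 := rfl

lemma cnt_cons (a : Bool) (A : List Bool) (k : ℕ) :
    cnt (a :: A) (k + 1) = (if a then 1 else 0) + cnt A k := by
  cases a <;> simp [cnt, List.count_cons, Nat.add_comm]

lemma cnt_append (P Q : List Bool) (k : ℕ) :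
    cnt (P ++ Q) k = cnt P k + cnt Q (k - P.length) := by
  simp [cnt, List.take_append, List.count_append]

lemma cnt_of_le {A : List Bool} {k : ℕ} (h : A.length ≤ k) : cnt A k = A.count true := by
  simp [cnt, List.take_of_length_le h]

lemma cnt_le (A : List Bool) (k : ℕ) : cnt A k ≤ k :=
  le_trans List.count_le_length (List.length_take_le k A)

lemma cnt_mono {A : List Bool} {k m : ℕ} (h : k ≤ m) : cnt A k ≤ cnt A m := by
  have : A.take k = (A.take m).take k := by rw [List.take_take, min_eq_left h]
  rw [cnt, this]
  exact List.Sublist.count_le _ (List.take_sublist _ _)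

lemma cnt_succ (A : List Bool) (k : ℕ) :
    cnt A (k + 1) = cnt A k + (A[k]?.toList).count true := by
  rw [cnt, List.take_succ, List.count_append, cnt]

lemma cnt_succ_le (A : List Bool) (k : ℕ) : cnt A (k + 1) ≤ cnt A k + 1 := by
  rw [cnt_succ]
  have : (A[k]?.toList).count true ≤ 1 := by
    cases h : A[k]? with
    | none => simp
    | some b => cases b <;> simp
  omega

lemma le_refl (A : List Bool) : Le A A := ⟨rfl, rfl, fun _ => Nat.le_refl _⟩

lemma le_trans {A B C : List Bool} (h1 : Le A B) (h2 : Le B C) : Le A C :=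
  ⟨h2.1.trans h1.1, h2.2.1.trans h1.2.1, fun k => (h2.2.2 k).trans (h1.2.2 k)⟩

lemma le_of_domStep {A B : List Bool} (h : DomStep A B) : Le A B := by
  obtain ⟨X, Y, rfl, rfl⟩ := h
  refine ⟨by simp, by simp [List.count_append], fun k => ?_⟩
  rw [cnt_append, cnt_append]
  have : ∀ j, cnt (false :: true :: Y) j ≤ cnt (true :: false :: Y) j := by
    intro j
    match j with
    | 0 => exact Nat.le_refl _
    | 1 => simp [cnt]
    | j + 2 => simp [cnt_cons]
  exact Nat.add_le_add_left (this _) _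

lemma le_of_dom {A B : List Bool} (h : Dom A B) : Le A B := by
  induction h with
  | refl => exact le_refl A
  | tail _ hstep ih => exact le_trans ih (le_of_domStep hstep)

lemma dom_single {A B : List Bool} (h : DomStep A B) : Dom A B :=
  Relation.ReflTransGen.single h

lemma dom_cons (x : Bool) {A B : List Bool} (h : Dom A B) : Dom (x :: A) (x :: B) :=
  Relation.ReflTransGen.lift (r := DomStep) (p := DomStep) (x :: ·)
    (fun a b ⟨X, Y, h1, h2⟩ => ⟨x :: X, Y, by simp [h1], by simp [h2]⟩) _ _ h

lemma dom_append_right (Z : List Bool) {A B : List Bool} (h : Dom A B) :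
    Dom (A ++ Z) (B ++ Z) :=
  Relation.ReflTransGen.lift (r := DomStep) (p := DomStep) (· ++ Z)
    (fun a b ⟨X, Y, h1, h2⟩ => ⟨X, Y ++ Z, by simp [h1], by simp [h2]⟩) _ _ h

lemma dom_append_left (Z : List Bool) {A B : List Bool} (h : Dom A B) :
    Dom (Z ++ A) (Z ++ B) :=
  Relation.ReflTransGen.lift (r := DomStep) (p := DomStep) (Z ++ ·)
    (fun a b ⟨X, Y, h1, h2⟩ => ⟨Z ++ X, Y, by simp [h1], by simp [h2]⟩) _ _ h

lemma dom_shuffle (m : ℕ) (R : List Bool) :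
    Dom (List.replicate m true ++ false :: R) (false :: (List.replicate m true ++ R)) := by
  induction m with
  | zero => simp; exact Relation.ReflTransGen.refl
  | succ m ih =>
    have h1 : List.replicate (m + 1) true ++ false :: R
        = true :: (List.replicate m true ++ false :: R) := by
      simp [List.replicate_succ]
    have h2 : Dom (true :: (List.replicate m true ++ false :: R))
        (true :: false :: (List.replicate m true ++ R)) := dom_cons true ih
    have h3 : DomStep (true :: false :: (List.replicate m true ++ R))
        (false :: true :: (List.replicate m true ++ R)) :=
      ⟨[], List.replicate m true ++ R, rfl, rfl⟩
    rw [h1]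
    refine h2.trans (Relation.ReflTransGen.single h3) |>.trans ?_
    simp [List.replicate_succ]
    exact Relation.ReflTransGen.refl

lemma exists_split (A : List Bool) (h : false ∈ A) :
    ∃ m R, A = List.replicate m true ++ false :: R := by
  induction A with
  | nil => simp at h
  | cons a A ih =>
    cases a with
    | false => exact ⟨0, A, rfl⟩
    | true =>
      have hf : false ∈ A := by simpa using h
      obtain ⟨m, R, hm⟩ := ih hf
      exact ⟨m + 1, R, by simp [List.replicate_succ, hm]⟩

lemma cnt_rep_app (m : ℕ) (R : List Bool) (k : ℕ) :
    cnt (List.replicate m true ++ R) k = min k m + cnt R (k - m) := by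
  rw [cnt_append]
  simp [cnt, List.take_replicate, List.count_replicate]

lemma dom_of_le : ∀ n A B, List.length A = n → Le A B → Dom A B := by
  intro n
  induction n with
  | zero =>
    intro A B hA hle
    have hA' : A = [] := List.length_eq_zero_iff.mp hA
    have hB' : B = [] := List.length_eq_zero_iff.mp (hle.1.trans hA)
    subst hA'; subst hB'
    exact Relation.ReflTransGen.refl
  | succ n ih =>
    intro A B hA hle
    obtain ⟨hlen, hcount, hcnt⟩ := hle
    cases A with
    | nil => simp at hA
    | cons a A' =>
      cases B with
      | nil => rw [hA] at hlen; simp at hlen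
      | cons b B' =>
        have hA' : A'.length = n := by simpa using hA
        have hlen' : B'.length = A'.length := by simpa using hlen
        by_cases hab : b = a
        · subst hab
          refine dom_cons b (ih A' B' hA' ⟨hlen', ?_, ?_⟩)
          · have := hcount
            simp [List.count_cons] at this
            omega
          · intro k
            have := hcnt (k + 1)
            rw [cnt_cons, cnt_cons] at this
            omega
        · cases a with
          | false =>
            have hb : b = true := by cases b <;> simp_all
            subst hb
            have := hcnt 1
            simp [cnt] at this
          | true =>
            have hb : b = false := by cases b <;> simp_all
            subst hb
            -- A' contains a false
            have hf : false ∈ A' := by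
              by_contra hnf
              have hall : A'.count true = A'.length := by
                rw [List.count_eq_length]
                intro x hx
                cases x with
                | false => exact absurd hx hnf
                | true => rfl
              have hc' : B'.count true = A'.count true + 1 := by
                have := hcount
                simp [List.count_cons] at this
                omega
              have := List.count_le_length (a := true) (l := B')
              omega
            obtain ⟨m, R, hmR⟩ := exists_split A' hf
            -- A = replicate (m+1) true ++ false :: R
            have hAeq : true :: A' = List.replicate (m + 1) true ++ false :: R := by
              simp [hmR, List.replicate_succ]
            have hshuf : Dom (true :: A')
                (false :: (List.replicate (m + 1) true ++ R)) := by
              rw [hAeq]; exact dom_shuffle (m + 1) R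
            set C := List.replicate (m + 1) true ++ R with hC
            have hClen : C.length = n := by
              have h5 : A'.length = m + 1 + R.length := by simp [hmR]; omega
              have h6 : C.length = m + 1 + R.length := by simp [hC]
              omega
            have hkey : Le C B' := by
              refine ⟨by omega, ?_, ?_⟩
              · have h1 : A'.count true = m + R.count true := by
                  simp [hmR, List.count_append, List.count_replicate]
                have h2 : (true :: A').count true = m + 1 + R.count true := by
                  simp [List.count_cons]; omega
                have h3 : C.count true = m + 1 + R.count true := by
                  simp [hC, List.count_append, List.count_replicate]
                have h4 : (false :: B').count true = B'.count true := by
                  simp [List.count_cons]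
                rw [h3]
                rw [h4] at hcount
                omega
              · intro k
                rw [hC, cnt_rep_app]
                rcases le_or_gt k (m + 1) with hk | hk
                · have : min k (m + 1) = k := by omega
                  rw [this]
                  exact Nat.le_trans (cnt_le _ _) (Nat.le_add_right _ _)
                · have h2 := hcnt (k + 1)
                  rw [cnt_cons, cnt_cons] at h2
                  rw [hmR, cnt_rep_app] at h2
                  have hkm : k - m = (k - (m + 1)) + 1 := by omega
                  rw [hkm, cnt_cons] at h2
                  have hm1 : min k m = m := by omega
                  have hm2 : min k (m + 1) = m + 1 := by omega
                  rw [hm1] at h2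
                  rw [hm2]
                  simp at h2 ⊢
                  omega
            exact hshuf.trans (dom_cons false (ih C B' hClen hkey))

lemma dom_iff_le {A B : List Bool} : Dom A B ↔ Le A B :=
  ⟨le_of_dom, fun h => dom_of_le A.length A B rfl h⟩

lemma split_le (X Y B : List Bool) (h : Le (X ++ true :: false :: Y) B) :
    Le (X ++ false :: true :: Y) B ∨
    ∃ B1 B2, B = B1 ++ true :: false :: B2 ∧ Le X B1 ∧ Le Y B2 := by
  obtain ⟨hlen, hcount, hcnt⟩ := h
  set n := X.length with hn
  have hAcnt : ∀ k, cnt (X ++ true :: false :: Y) k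
      = cnt X k + cnt (true :: false :: Y) (k - n) := fun k => cnt_append X _ k
  have hXfull : ∀ k, n ≤ k → cnt X k = X.count true := fun k hk => cnt_of_le hk
  have hA1 : cnt (X ++ true :: false :: Y) (n + 1) = X.count true + 1 := by
    rw [hAcnt, hXfull _ (by omega)]
    have : n + 1 - n = 1 := by omega
    rw [this]
    simp [cnt]
  have hA0 : cnt (X ++ true :: false :: Y) n = X.count true := by
    rw [hAcnt, hXfull _ (by omega)]
    have : n - n = 0 := by omega
    rw [this, cnt_zero]
    omega
  have hA2 : cnt (X ++ true :: false :: Y) (n + 2) = X.count true + 1 := by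
    rw [hAcnt, hXfull _ (by omega)]
    have : n + 2 - n = 2 := by omega
    rw [this]
    simp [cnt]
  by_cases hc : cnt B (n + 1) ≤ X.count true
  · left
    refine ⟨by simpa using hlen, by simpa [List.count_append] using hcount, fun k => ?_⟩
    rw [cnt_append]
    rcases eq_or_ne k (n + 1) with rfl | hk
    · have : n + 1 - n = 1 := by omega
      rw [this, hXfull _ (by omega)]
      have h1 : cnt (false :: true :: Y) 1 = 0 := by simp [cnt]
      omega
    · have heq : cnt (false :: true :: Y) (k - n) = cnt (true :: false :: Y) (k - n) := by
        have hkn : k - n ≠ 1 := by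
          rcases le_or_gt k n with h' | h'
          · omega
          · omega
        match hj : k - n, hkn with
        | 0, _ => rfl
        | 1, hkn => exact absurd rfl hkn
        | (j + 2), _ => simp [cnt_cons]
      rw [heq, ← cnt_append]
      exact hcnt k
  · right
    push_neg at hc
    have e1 : cnt B (n + 1) = X.count true + 1 := by
      have := hcnt (n + 1); rw [hA1] at this; omega
    have e0 : cnt B n = X.count true := by
      have h1 := hcnt n; rw [hA0] at h1
      have h2 := cnt_succ_le B n
      omega
    have e2 : cnt B (n + 2) = X.count true + 1 := by
      have h1 := hcnt (n + 2); rw [hA2] at h1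
      have h2 : cnt B (n + 1) ≤ cnt B (n + 2) := cnt_mono (by omega)
      omega
    have hBlen : B.length = n + 2 + Y.length := by simp at hlen; omega
    have hlt1 : n < B.length := by omega
    have hlt2 : n + 1 < B.length := by omega
    have hb : B[n] = true := by
      have h1 := cnt_succ B n
      rw [List.getElem?_eq_getElem hlt1] at h1
      cases hx : B[n] with
      | true => rfl
      | false => rw [hx] at h1; simp at h1; omega
    have hbc : B[n + 1] = false := by
      have h1 := cnt_succ B (n + 1)
      rw [List.getElem?_eq_getElem hlt2] at h1
      have hnorm : n + 1 + 1 = n + 2 := by omega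
      rw [hnorm] at h1
      cases hx : B[n + 1] with
      | false => rfl
      | true => rw [hx] at h1; simp at h1; omega
    have hdec : B = B.take n ++ true :: false :: B.drop (n + 2) := by
      conv_lhs => rw [← List.take_append_drop n B]
      rw [List.drop_eq_getElem_cons hlt1, List.drop_eq_getElem_cons hlt2, hb, hbc]
    refine ⟨B.take n, B.drop (n + 2), hdec, ⟨?_, ?_, ?_⟩, ⟨?_, ?_, ?_⟩⟩
    · simp; omega
    · exact e0
    · intro k
      have h1 : cnt (B.take n) k = cnt B (min k n) := by
        simp [cnt, List.take_take]
      rw [h1]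
      have h2 := hcnt (min k n)
      rw [hAcnt] at h2
      have h3 : min k n - n = 0 := by omega
      rw [h3, cnt_zero] at h2
      exact Nat.le_trans (by omega) (cnt_mono (min_le_left k n))
    · simp; omega
    · have hsum : cnt B (n + 2) + (B.drop (n + 2)).count true = B.count true := by
        rw [cnt, ← List.count_append, List.take_append_drop]
      have hcY := hcount
      simp [List.count_append, List.count_cons] at hcY
      omega
    · intro k
      have h1 : (B.drop (n + 2)).take k = (B.take (n + 2 + k)).drop (n + 2) := by
        rw [List.drop_take]
        congr 1
        omega
      have h2 : cnt B (n + 2 + k) = cnt B (n + 2) + cnt (B.drop (n + 2)) k := by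
        rw [cnt, cnt, cnt, h1]
        rw [← List.count_append]
        congr 1
        have h3 : B.take (n + 2) = (B.take (n + 2 + k)).take (n + 2) := by
          rw [List.take_take]
          congr 1
          omega
        rw [h3, List.take_append_drop]
      have h4 := hcnt (n + 2 + k)
      rw [hAcnt, hXfull _ (by omega)] at h4
      have h5 : n + 2 + k - n = k + 2 := by omega
      rw [h5] at h4
      have h6 : cnt (true :: false :: Y) (k + 2) = 1 + cnt Y k := by
        simp [cnt_cons]
      rw [h6] at h4
      omega

lemma finite_dom (A : List Bool) : {B | Dom A B}.Finite :=
  (List.finite_length_eq Bool A.length).subset fun B hB => (le_of_dom hB).1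

lemma ncard_prod (s t : Set (List Bool)) :
    (s ×ˢ t).ncard = s.ncard * t.ncard := by
  rw [← Nat.card_coe_set_eq, ← Nat.card_coe_set_eq, ← Nat.card_coe_set_eq,
    Nat.card_congr (Equiv.Set.prod s t), Nat.card_prod]

end WS

open WS in
/-- For all binary sequences X and Y: W(X·10·Y) = W(X·01·Y) + W(X)·W(Y). -/
theorem weight_swap (X Y : List Bool) :
    W (X ++ true :: false :: Y) = W (X ++ false :: true :: Y) + W X * W Y := by
  classical
  set T : Set (List Bool) :=
    (fun p : List Bool × List Bool => p.1 ++ true :: false :: p.2) ''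
      ({B | Dom X B} ×ˢ {B | Dom Y B}) with hT
  have hstep : DomStep (X ++ true :: false :: Y) (X ++ false :: true :: Y) := ⟨X, Y, rfl, rfl⟩
  have hunion : {B | Dom (X ++ true :: false :: Y) B}
      = {B | Dom (X ++ false :: true :: Y) B} ∪ T := by
    ext B
    constructor
    · intro hB
      rcases split_le X Y B (le_of_dom hB) with h | ⟨B1, B2, rfl, h1, h2⟩
      · exact Or.inl (dom_iff_le.mpr h)
      · exact Or.inr ⟨(B1, B2), ⟨dom_iff_le.mpr h1, dom_iff_le.mpr h2⟩, rfl⟩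
    · rintro (hB | ⟨⟨B1, B2⟩, ⟨h1, h2⟩, rfl⟩)
      · exact (dom_single hstep).trans hB
      · have g1 : Dom (X ++ true :: false :: Y) (B1 ++ true :: false :: Y) :=
          dom_append_right _ h1
        have g2 : Dom (B1 ++ true :: false :: Y) (B1 ++ true :: false :: B2) := by
          have := dom_append_left (B1 ++ [true, false]) h2
          simpa using this
        exact g1.trans g2
  have hdisj : Disjoint {B | Dom (X ++ false :: true :: Y) B} T := by
    rw [Set.disjoint_left]
    rintro B hB ⟨⟨B1, B2⟩, ⟨h1, h2⟩, heq⟩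
    simp only at heq
    subst heq
    have hle := le_of_dom hB
    have hB1 := le_of_dom h1
    have hlen1 : B1.length = X.length := hB1.1
    have hc1 : B1.count true = X.count true := hB1.2.1
    have hk := hle.2.2 (X.length + 1)
    have hR : cnt (X ++ false :: true :: Y) (X.length + 1) = X.count true := by
      rw [cnt_append, cnt_of_le (Nat.le_succ _)]
      have h5 : X.length + 1 - X.length = 1 := by omega
      rw [h5]
      simp [cnt]
    have h7 : cnt (B1 ++ true :: false :: B2) (X.length + 1) = B1.count true + 1 := by
      rw [cnt_append, hlen1, cnt_of_le (by omega)]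
      have h5 : X.length + 1 - X.length = 1 := by omega
      rw [h5]
      simp [cnt]
    rw [hR, h7] at hk
    omega
  have hinj : Set.InjOn (fun p : List Bool × List Bool => p.1 ++ true :: false :: p.2)
      ({B | Dom X B} ×ˢ {B | Dom Y B}) := by
    rintro ⟨a1, a2⟩ ⟨ha1, _⟩ ⟨b1, b2⟩ ⟨hb1, _⟩ heq
    simp only at heq
    have hl : a1.length = b1.length := by
      rw [(le_of_dom ha1).1, (le_of_dom hb1).1]
    obtain ⟨h1, h2⟩ := List.append_inj heq hl
    simp at h2
    simp [h1, h2]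
  have hfin01 := finite_dom (X ++ false :: true :: Y)
  have hfinT : T.Finite := ((finite_dom X).prod (finite_dom Y)).image _
  rw [W, W, W, W, hunion, Set.ncard_union_eq hdisj hfin01 hfinT, hT,
    Set.ncard_image_of_injOn hinj, ncard_prod]
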